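/- The number of framing functions F : M → M on M = {-Q, ..., Q} that are odd, non-decreasing, and whose LUT vector (|F(0)|, F(1), ..., F(Q)) has exactly W distinct entries, equals C(Q, W-1) · C(Q+1, W), where C denotes the binomial coefficient. -/

import Mathlib

/-!
A monotone map `a` whose image is a `W`-element set `t` factors uniquely as a monotone
surjection onto `Fin W` followed by the increasing enumeration of `t`, which gives the factor
`C(Q+1, W)`. A monotone surjection `f : Fin (n + 1) → Fin (k + 1)` climbs by steps of at most
one from `0` to `k`, so `f i` is the number of positions before `i` where it steps up; hence `f`
corresponds to the `k`-element set of these positions in `Fin n`, which gives `C(Q, W-1)`.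
-/

open Finset Function

namespace Fin

variable {n : ℕ}

theorem exists_eq_of_le_of_succ_le_add_one {g : Fin (n + 1) → ℕ} (h0 : g 0 = 0)
    (hstep : ∀ i : Fin n, g i.succ ≤ g i.castSucc + 1) {v : ℕ} (hv : v ≤ g (last n)) :
    ∃ i, g i = v := by
  suffices ∀ i, v ≤ g i → ∃ j, g j = v from this _ hv
  intro i
  induction i using Fin.induction with
  | zero => exact fun hv => ⟨0, by omega⟩
  | succ i ih =>
    intro hv
    by_cases hvi : v ≤ g i.castSucc
    · exact ih hvi
    · exact ⟨i.succ, by linarith [hstep i]⟩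

def countBelow (s : Finset (Fin n)) (i : Fin (n + 1)) : ℕ := #{j ∈ s | j.castSucc < i}

section countBelow

variable (s : Finset (Fin n))

@[simp] theorem countBelow_zero : countBelow s 0 = 0 := by
  simp [countBelow]

theorem countBelow_succ (i : Fin n) :
    countBelow s i.succ = countBelow s i.castSucc + if i ∈ s then 1 else 0 := by
  simp only [countBelow, castSucc_lt_succ_iff, castSucc_lt_castSucc_iff, le_iff_lt_or_eq,
    filter_or]
  rw [card_union_of_disjoint (disjoint_filter.2 fun _ _ h => h.ne), filter_eq']
  split_ifs <;> simp

theorem countBelow_last : countBelow s (last n) = #s := by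
  simp [countBelow, castSucc_lt_last]

theorem countBelow_mono : Monotone (countBelow s) :=
  fun _ _ h => card_le_card fun _ hj => by
    simp only [mem_filter] at hj ⊢
    exact ⟨hj.1, hj.2.trans_le h⟩

theorem countBelow_le_card (i : Fin (n + 1)) : countBelow s i ≤ #s :=
  card_filter_le _ _

end countBelow

def jumps {m : ℕ} (f : Fin (n + 1) → Fin m) : Finset (Fin n) := {j | f j.castSucc < f j.succ}

section jumps

variable {m : ℕ} {f : Fin (n + 1) → Fin m}

theorem val_succ_le_of_monotone_of_surjective (hf : Monotone f) (hs : Surjective f) (i : Fin n) :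
    (f i.succ : ℕ) ≤ f i.castSucc + 1 := by
  by_contra! h
  obtain ⟨x, hx⟩ := hs ⟨f i.castSucc + 1, by omega⟩
  rcases le_or_gt x i.castSucc with hxi | hxi
  · have := hf hxi
    simp only [hx, le_def] at this
    omega
  · have := hf (castSucc_lt_iff_succ_le.1 hxi)
    simp only [hx, le_def] at this
    omega

theorem val_eq_countBelow_jumps (hf : Monotone f) (hs : Surjective f) (i : Fin (n + 1)) :
    (f i : ℕ) = countBelow (jumps f) i := by
  induction i using Fin.induction with
  | zero =>
    obtain ⟨x, hx⟩ := hs ⟨0, (f 0).pos⟩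
    have := hf (zero_le x)
    rw [hx, le_def] at this
    simpa using this
  | succ i ih =>
    rw [countBelow_succ, ← ih]
    have hle := val_succ_le_of_monotone_of_surjective hf hs i
    have hge := hf (castSucc_le_succ i)
    by_cases hi : f i.castSucc < f i.succ
    · simp only [jumps, mem_filter, mem_univ, true_and, hi, if_true]
      rw [lt_def] at hi
      omega
    · simp only [jumps, mem_filter, mem_univ, true_and, hi, if_false]
      rw [le_antisymm (not_lt.1 hi) hge, add_zero]

theorem card_jumps_of_monotone_of_surjective {k : ℕ} {f : Fin (n + 1) → Fin (k + 1)}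
    (hf : Monotone f) (hs : Surjective f) : #(jumps f) = k := by
  obtain ⟨x, hx⟩ := hs (last k)
  have hle := hf (le_last x)
  rw [hx] at hle
  have hlast : f (last n) = last k := le_antisymm (le_last _) hle
  rw [← countBelow_last, ← val_eq_countBelow_jumps hf hs, hlast, val_last]

end jumps

theorem card_monotone_surjective (n k : ℕ) :
    Nat.card {f : Fin (n + 1) → Fin (k + 1) // Monotone f ∧ Surjective f} = n.choose k := by
  have hsets := Fintype.card_finset_len (α := Fin n) k
  rw [Fintype.card_fin, ← Nat.card_eq_fintype_card] at hsets
  rw [← hsets]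
  refine Nat.card_eq_of_bijective
    (fun f => ⟨jumps f.1, card_jumps_of_monotone_of_surjective f.2.1 f.2.2⟩) ⟨?_, ?_⟩
  · rintro ⟨f, hf, hfs⟩ ⟨g, hg, hgs⟩ h
    have hj : jumps f = jumps g := congrArg Subtype.val h
    refine Subtype.ext (funext fun i => Fin.ext ?_)
    change (f i : ℕ) = g i
    rw [val_eq_countBelow_jumps hf hfs, val_eq_countBelow_jumps hg hgs, hj]
  · rintro ⟨s, hs⟩
    have hlt (i : Fin (n + 1)) : countBelow s i < k + 1 :=
      Nat.lt_succ_of_le (hs ▸ countBelow_le_card s i)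
    refine ⟨⟨fun i => ⟨countBelow s i, hlt i⟩, fun i j hij => countBelow_mono s hij,
      fun v => ?_⟩, ?_⟩
    · obtain ⟨i, hi⟩ := exists_eq_of_le_of_succ_le_add_one (countBelow_zero s)
        (fun i => by rw [countBelow_succ]; split_ifs <;> omega)
        (v := v) (by rw [countBelow_last, hs]; exact v.is_le)
      exact ⟨i, Fin.ext hi⟩
    · ext j
      simp only [jumps, mem_filter, mem_univ, true_and, Fin.mk_lt_mk, countBelow_succ]
      split_ifs with hj <;> simp [hj]

end Fin

theorem Finset.image_orderEmbOfFin_comp {ι α : Type*} [Fintype ι] [LinearOrder α]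
    (t : Finset α) {k : ℕ} (ht : #t = k) {f : ι → Fin k} (hf : Surjective f) :
    image (t.orderEmbOfFin ht ∘ f) univ = t := by
  rw [image_comp, image_univ_of_surjective hf, image_orderEmbOfFin_univ]

theorem card_monotone_card_image_eq {ι α : Type*} [Preorder ι] [Fintype ι] [LinearOrder α]
    [Fintype α] (W : ℕ) :
    Nat.card {a : ι → α // Monotone a ∧ #(image a univ) = W} =
      (Fintype.card α).choose W * Nat.card {f : ι → Fin W // Monotone f ∧ Surjective f} := by
  rw [← Fintype.card_finset_len, ← Nat.card_eq_fintype_card, ← Nat.card_prod]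
  symm
  refine Nat.card_eq_of_bijective (fun p => ⟨p.1.1.orderEmbOfFin p.1.2 ∘ p.2.1,
    (p.1.1.orderEmbOfFin p.1.2).monotone.comp p.2.2.1,
    by rw [image_orderEmbOfFin_comp _ _ p.2.2.2, p.1.2]⟩) ⟨?_, ?_⟩
  · rintro ⟨⟨t, ht⟩, f, hf⟩ ⟨⟨t', ht'⟩, f', hf'⟩ h
    have h' : t.orderEmbOfFin ht ∘ f = t'.orderEmbOfFin ht' ∘ f' := congrArg Subtype.val h
    obtain rfl : t = t' := by
      rw [← image_orderEmbOfFin_comp t ht hf.2, h', image_orderEmbOfFin_comp t' ht' hf'.2]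
    obtain rfl : f = f' := funext fun i => (t.orderEmbOfFin ht).injective (congrFun h' i)
    rfl
  · rintro ⟨a, ha, hW⟩
    have hmem (i : ι) : ∃ k, (image a univ).orderEmbOfFin hW k = a i := by
      rw [← Set.mem_range, range_orderEmbOfFin]
      exact mem_image_of_mem a (mem_univ i)
    choose g hg using hmem
    refine ⟨⟨⟨_, hW⟩, g, fun i j hij => ?_, fun k => ?_⟩, Subtype.ext (funext hg)⟩
    · rw [← (image a univ).orderEmbOfFin hW |>.le_iff_le, hg, hg]
      exact ha hij
    · obtain ⟨i, -, hi⟩ := mem_image.1 (orderEmbOfFin_mem _ hW k)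
      exact ⟨i, ((image a univ).orderEmbOfFin hW).injective (by rw [hg, hi])⟩

theorem card_ns_faids_general (Q W : ℕ) (hW1 : 1 ≤ W) :
    Nat.card {a : Fin (Q + 1) → Fin (Q + 1) //
        Monotone a ∧ (Finset.image a Finset.univ).card = W}
      = Nat.choose Q (W - 1) * Nat.choose (Q + 1) W := by
  obtain ⟨k, rfl⟩ := Nat.exists_eq_add_of_le' hW1
  rw [card_monotone_card_image_eq, Fin.card_monotone_surjective, Fintype.card_fin,
    Nat.add_sub_cancel, mul_comm]

/-- Proposition 2: the number of `(2Q+1)`-level NS-FAIDs of weight `W`, i.e. of framing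
functions identified with their LUT vector `(|F 0|, F 1, …, F Q)` — a non-decreasing
sequence of length `Q+1` with values in `{0,…,Q}` — having exactly `W` distinct entries,
equals `C(Q, W-1) * C(Q+1, W)`. -/
theorem card_ns_faids (Q W : ℕ) (hQ : 1 ≤ Q) (hW1 : 1 ≤ W) (hW2 : W ≤ Q + 1) :
    Nat.card {a : Fin (Q + 1) → Fin (Q + 1) //
        Monotone a ∧ (Finset.image a Finset.univ).card = W}
      = Nat.choose Q (W - 1) * Nat.choose (Q + 1) W :=
  card_ns_faids_general Q W hW1
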